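/- There exist constants T̄ > 0 and C > 0, depending only on m, c and K, such that for all τ with |τ − t| ≤ T̄, all p ∈ ℝ³ and all i, j ∈ {1,2,3}, the momentum derivatives of the spatial characteristic satisfy |∂_{p_i} X_j(τ; t, x, p)| ≤ C c |t − τ| / p⁰. -/

import Mathlib

noncomputable section

/-- Euclidean inner product on ℝ³. -/
def dot3 (p q : Fin 3 → ℝ) : ℝ := ∑ i, p i * q i

/-!
Differentiate the characteristic system in `p` along a direction `e`: the variations
`Y = ∂ₚX e` and `Q = ∂ₚP e` (the time derivative commutes with `∂ₚ` because `(X, P)` is `C²`)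
solve the linear system
`Y' = c Dβ(P) Q`, `Q' = -DE(X) Y - β(P) × DB(X) Y - Dβ(P) Q × B(X)`, `Y(t) = 0`, `Q(t) = e`,
where `β = P / P⁰` and, for the sup norm on `ℝ³`, `‖β‖ ≤ 1` and `‖Dβ(P)‖ ≤ 4 / P⁰ ≤ 4 / (mc)`.
Grönwall bounds `Q` by `‖e‖ exp (L |σ - t|)` with `L` depending only on `m, c, K`.
The Lorentz force is bounded by `3K`, so for `|σ - t| ≤ mc / (18K)` the momentum moves by at most
`mc / 6`; as `P⁰` is `3`-Lipschitz and `p⁰ ≥ mc`, this keeps `P⁰ ≥ p⁰ / 2`. Hence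
`‖Y'‖ ≤ 4c ‖Q‖ / P⁰ ≤ 8c ‖e‖ exp (L T̄) / p⁰`, and integrating from `Y(t) = 0` gives the bound.
-/

open Function
open scoped Matrix

local notation "ℝ³" => Fin 3 → ℝ

section Calculus

variable {E F : Type*} [NormedAddCommGroup E] [NormedSpace ℝ E]
  [NormedAddCommGroup F] [NormedSpace ℝ F] {G : ℝ → E → F}

lemma Differentiable.of_uncurry (hG : Differentiable ℝ (uncurry G)) (σ : ℝ) :
    Differentiable ℝ (G σ) :=
  hG.comp (differentiable_const σ |>.prodMk differentiable_id)

lemma hasFDerivAt_of_uncurry (hG : Differentiable ℝ (uncurry G)) (σ : ℝ) (q : E) :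
    HasFDerivAt (G σ) ((fderiv ℝ (uncurry G) (σ, q)).comp (.inr ℝ ℝ E)) q :=
  (hG (σ, q)).hasFDerivAt.comp q (hasFDerivAt_prodMk_right σ q)

lemma hasDerivAt_of_uncurry (hG : Differentiable ℝ (uncurry G)) (σ : ℝ) (q : E) :
    HasDerivAt (G · q) (fderiv ℝ (uncurry G) (σ, q) (1, 0)) σ := by
  simpa [Function.comp_def] using
    ((hG (σ, q)).hasFDerivAt.comp σ (hasFDerivAt_prodMk_left σ q)).hasDerivAt

lemma hasDerivAt_fderiv_of_contDiff_uncurry {H : ℝ → E → F}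
    (hG : ContDiff ℝ 2 (uncurry G)) (hH : ∀ τ q, HasDerivAt (G · q) (H τ q) τ)
    (p v : E) (τ : ℝ) :
    HasDerivAt (fun σ => fderiv ℝ (G σ) p v) (fderiv ℝ (H τ) p v) τ := by
  have hG1 : Differentiable ℝ (uncurry G) := hG.differentiable (by norm_num)
  set D := fderiv ℝ (uncurry G)
  have hD : Differentiable ℝ D := (hG.fderiv_right (le_refl 2)).differentiable one_ne_zero
  set D2 := fderiv ℝ D (τ, p)
  have hslice : ∀ σ, fderiv ℝ (G σ) p v = D (σ, p) (0, v) := fun σ => by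
    rw [(hasFDerivAt_of_uncurry hG1 σ p).fderiv]; rfl
  have hH_eq : H τ = fun q => D (τ, q) (1, 0) :=
    funext fun q => (hH τ q).unique (hasDerivAt_of_uncurry hG1 τ q)
  have hsymm : D2 (1, 0) (0, v) = D2 (0, v) (1, 0) :=
    hG.contDiffAt.isSymmSndFDerivAt (by simp) _ _
  have htime : HasDerivAt (fun σ => D (σ, p)) (D2 (1, 0)) τ :=
    hasDerivAt_of_uncurry (G := fun σ q => D (σ, q)) hD τ p
  have hspace : HasFDerivAt (fun q => D (τ, q)) (D2.comp (.inr ℝ ℝ E)) p :=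
    hasFDerivAt_of_uncurry (G := fun σ q => D (σ, q)) hD τ p
  rw [funext hslice, hH_eq, (hspace.clm_apply (hasFDerivAt_const ((1 : ℝ), (0 : E)) p)).fderiv]
  simpa [hsymm] using htime.clm_apply (hasDerivAt_const τ ((0 : ℝ), v))

end Calculus

lemma ContinuousLinearMap.opNorm_le_card_mul_of_abs_apply_single_le {ι κ : Type*}
    [Fintype ι] [DecidableEq ι] [Fintype κ] (T : (ι → ℝ) →L[ℝ] (κ → ℝ)) {K : ℝ}
    (hK : 0 ≤ K)
    (hT : ∀ j k, |T (Pi.single k 1) j| ≤ K) : ‖T‖ ≤ Fintype.card ι * K := by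
  have hCK : 0 ≤ (Fintype.card ι : ℝ) * K := mul_nonneg (Nat.cast_nonneg _) hK
  refine T.opNorm_le_bound hCK fun w =>
    (pi_norm_le_iff_of_nonneg (mul_nonneg hCK (norm_nonneg w))).2 fun j => ?_
  have hw : ∀ k, |w k| ≤ ‖w‖ := fun k => norm_le_pi_norm w k
  calc ‖T w j‖ = |∑ k, w k * T (Pi.single k 1) j| := by
        conv_lhs => rw [pi_eq_sum_univ' w]
        simp [Real.norm_eq_abs]
    _ ≤ ∑ k, |w k| * |T (Pi.single k 1) j| :=
        (Finset.abs_sum_le_sum_abs _ _).trans_eq (by simp_rw [abs_mul])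
    _ ≤ ∑ _k : ι, ‖w‖ * K :=
        Finset.sum_le_sum fun k _ => mul_le_mul (hw k) (hT j k) (abs_nonneg _) (norm_nonneg _)
    _ = Fintype.card ι * K * ‖w‖ := by simp; ring

lemma norm_fderiv_le_of_abs_partial_le {n : ℕ} {f : (Fin n → ℝ) → Fin n → ℝ}
    {y : Fin n → ℝ} (hf : DifferentiableAt ℝ f y) {K : ℝ} (hK : 0 ≤ K)
    (h : ∀ i j, |fderiv ℝ (fun y' => f y' i) y (Pi.single j 1)| ≤ K) :
    ‖fderiv ℝ f y‖ ≤ n * K := by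
  simpa using (fderiv ℝ f y).opNorm_le_card_mul_of_abs_apply_single_le hK fun i j => by
    simpa [fderiv_apply hf] using h i j

lemma norm_crossProduct_le (a b : ℝ³) : ‖a ⨯₃ b‖ ≤ 2 * ‖a‖ * ‖b‖ := by
  have hab : ∀ i j, |a i * b j| ≤ ‖a‖ * ‖b‖ := fun i j => by
    rw [abs_mul]
    exact mul_le_mul (norm_le_pi_norm a i) (norm_le_pi_norm b j) (abs_nonneg _) (norm_nonneg _)
  have key : ∀ i j k l, |a i * b j - a k * b l| ≤ 2 * ‖a‖ * ‖b‖ := fun i j k l => by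
    linarith [abs_sub (a i * b j) (a k * b l), hab i j, hab k l]
  refine (pi_norm_le_iff_of_nonneg (by positivity)).2 fun k => ?_
  rw [Real.norm_eq_abs, cross_apply]
  fin_cases k <;> exact key _ _ _ _

def crossCLM : ℝ³ →L[ℝ] ℝ³ →L[ℝ] ℝ³ :=
  LinearMap.mkContinuous₂ crossProduct 2 norm_crossProduct_le

lemma abs_dot3_le (u v : ℝ³) : |dot3 u v| ≤ 3 * ‖u‖ * ‖v‖ := by
  have huv : ∀ i, |u i * v i| ≤ ‖u‖ * ‖v‖ := fun i => by
    rw [abs_mul]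
    exact mul_le_mul (norm_le_pi_norm u i) (norm_le_pi_norm v i) (abs_nonneg _) (norm_nonneg _)
  calc |dot3 u v| ≤ ∑ i, |u i * v i| := Finset.abs_sum_le_sum_abs _ _
    _ ≤ ∑ _i : Fin 3, ‖u‖ * ‖v‖ := Finset.sum_le_sum fun i _ => huv i
    _ = 3 * ‖u‖ * ‖v‖ := by simp; ring

lemma dot3_self_nonneg (u : ℝ³) : 0 ≤ dot3 u u :=
  Finset.sum_nonneg fun i _ => mul_self_nonneg (u i)

lemma sq_norm_le_dot3_self (u : ℝ³) : ‖u‖ ^ 2 ≤ dot3 u u := by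
  obtain ⟨i, -, hi⟩ := Finset.exists_max_image Finset.univ (fun i => |u i|) Finset.univ_nonempty
  have hnorm : ‖u‖ = |u i| :=
    le_antisymm ((pi_norm_le_iff_of_nonneg (abs_nonneg _)).2 fun j => hi j (Finset.mem_univ j))
      (norm_le_pi_norm u i)
  rw [hnorm, sq_abs, sq]
  exact Finset.single_le_sum (fun j _ => mul_self_nonneg (u j)) (Finset.mem_univ i)

def dotCLM (u : ℝ³) : ℝ³ →L[ℝ] ℝ := ∑ i, u i • ContinuousLinearMap.proj i

@[simp] lemma dotCLM_apply (u v : ℝ³) : dotCLM u v = dot3 u v := by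
  simp [dotCLM, dot3]

lemma hasFDerivAt_dot3_self (u : ℝ³) :
    HasFDerivAt (fun q => dot3 q q) ((2 : ℝ) • dotCLM u) u := by
  have hproj := fun i : Fin 3 => hasFDerivAt_apply (𝕜 := ℝ) i u
  refine (HasFDerivAt.fun_sum fun i _ => (hproj i).fun_mul (hproj i)).congr_fderiv ?_
  ext v
  simp [dotCLM, two_smul, Finset.sum_add_distrib]

def pZero (m c : ℝ) (u : ℝ³) : ℝ := √(m ^ 2 * c ^ 2 + dot3 u u)

/-- `β = u / u⁰`, so that `c β` is the velocity. -/
def beta (m c : ℝ) (u : ℝ³) : ℝ³ := (pZero m c u)⁻¹ • u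

def betaJac (m c : ℝ) (u : ℝ³) : ℝ³ →L[ℝ] ℝ³ :=
  (pZero m c u)⁻¹ • ContinuousLinearMap.id ℝ _ -
    ((pZero m c u ^ 3)⁻¹ • dotCLM u).smulRight u

def lorentzForce (m c : ℝ) (E B u : ℝ³) : ℝ³ := -E - beta m c u ⨯₃ B

section pZero

variable {m c : ℝ}

lemma mul_le_pZero (m c : ℝ) (u : ℝ³) : m * c ≤ pZero m c u :=
  calc m * c ≤ √((m * c) ^ 2) := by rw [Real.sqrt_sq_eq_abs]; exact le_abs_self _
    _ ≤ pZero m c u := Real.sqrt_le_sqrt (by nlinarith [dot3_self_nonneg u])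

lemma norm_le_pZero (m c : ℝ) (u : ℝ³) : ‖u‖ ≤ pZero m c u :=
  calc ‖u‖ = √(‖u‖ ^ 2) := (Real.sqrt_sq (norm_nonneg u)).symm
    _ ≤ pZero m c u := Real.sqrt_le_sqrt (by nlinarith [sq_norm_le_dot3_self u])

lemma pZero_pos (hmc : 0 < m * c) (u : ℝ³) : 0 < pZero m c u :=
  hmc.trans_le (mul_le_pZero m c u)

lemma hasFDerivAt_pZero (hmc : 0 < m * c) (u : ℝ³) :
    HasFDerivAt (pZero m c) ((pZero m c u)⁻¹ • dotCLM u) u := by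
  have hpos := pZero_pos hmc u
  have hsqrt := Real.hasDerivAt_sqrt (x := m ^ 2 * c ^ 2 + dot3 u u) (by
    nlinarith [dot3_self_nonneg u, mul_pos hmc hmc])
  refine (hsqrt.comp_hasFDerivAt u ((hasFDerivAt_dot3_self u).const_add _)).congr_fderiv ?_
  ext v
  simp only [pZero] at hpos ⊢
  simp
  field_simp

lemma abs_pZero_sub_pZero_le (hmc : 0 < m * c) (u v : ℝ³) :
    |pZero m c u - pZero m c v| ≤ 3 * ‖u - v‖ := by
  have hderiv : ∀ w, ‖(pZero m c w)⁻¹ • dotCLM w‖ ≤ 3 := fun w => by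
    have hpos := pZero_pos hmc w
    refine ContinuousLinearMap.opNorm_le_bound _ (by norm_num) fun h => ?_
    rw [smul_apply, dotCLM_apply, norm_smul, norm_inv, Real.norm_of_nonneg
      hpos.le, Real.norm_eq_abs, inv_mul_le_iff₀ hpos]
    calc |dot3 w h| ≤ 3 * ‖w‖ * ‖h‖ := abs_dot3_le w h
      _ ≤ 3 * pZero m c w * ‖h‖ := by gcongr; exact norm_le_pZero m c w
      _ = pZero m c w * (3 * ‖h‖) := by ring
  simpa [Real.norm_eq_abs] using
    Convex.norm_image_sub_le_of_norm_hasFDerivWithin_le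
      (fun w _ => (hasFDerivAt_pZero hmc w).hasFDerivWithinAt) (fun w _ => hderiv w)
      convex_univ (Set.mem_univ v) (Set.mem_univ u)

lemma norm_beta_le_one (hmc : 0 < m * c) (u : ℝ³) : ‖beta m c u‖ ≤ 1 := by
  have hpos := pZero_pos hmc u
  rw [beta, norm_smul, norm_inv, Real.norm_of_nonneg hpos.le, inv_mul_le_one₀ hpos]
  exact norm_le_pZero m c u

lemma hasFDerivAt_beta (hmc : 0 < m * c) (u : ℝ³) :
    HasFDerivAt (beta m c) (betaJac m c u) u := by
  have hpos := pZero_pos hmc u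
  have hinv := (hasDerivAt_inv hpos.ne').comp_hasFDerivAt u (hasFDerivAt_pZero hmc u)
  refine (hinv.smul (hasFDerivAt_id u)).congr_fderiv ?_
  ext v i
  simp [betaJac]
  field_simp
  ring

lemma norm_betaJac_le (hmc : 0 < m * c) (u : ℝ³) :
    ‖betaJac m c u‖ ≤ 4 / pZero m c u := by
  have hpos := pZero_pos hmc u
  refine ContinuousLinearMap.opNorm_le_bound _ (by positivity) fun h => ?_
  have hu := norm_le_pZero m c u
  have hdot : |dot3 u h| * ‖u‖ ≤ 3 * pZero m c u ^ 2 * ‖h‖ :=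
    calc |dot3 u h| * ‖u‖ ≤ 3 * ‖u‖ * ‖h‖ * ‖u‖ := by
          gcongr; exact abs_dot3_le u h
      _ ≤ 3 * pZero m c u * ‖h‖ * pZero m c u := by gcongr
      _ = 3 * pZero m c u ^ 2 * ‖h‖ := by ring
  calc ‖betaJac m c u h‖
      ≤ (pZero m c u)⁻¹ * ‖h‖ + (pZero m c u ^ 3)⁻¹ * (|dot3 u h| * ‖u‖) := by
        refine (norm_sub_le _ _).trans_eq ?_
        simp [norm_smul, abs_of_pos hpos, mul_assoc]
    _ ≤ (pZero m c u)⁻¹ * ‖h‖ + (pZero m c u ^ 3)⁻¹ * (3 * pZero m c u ^ 2 * ‖h‖) := by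
        gcongr
    _ = 4 / pZero m c u * ‖h‖ := by field_simp; ring

end pZero

section Linearization

variable {m c : ℝ} {E B f g : ℝ³ → ℝ³} {p : ℝ³}

lemma norm_fderiv_smul_beta_comp_le (hmc : 0 < m * c) (hc : 0 ≤ c)
    (hg : DifferentiableAt ℝ g p) (e : ℝ³) :
    ‖fderiv ℝ (fun q => c • beta m c (g q)) p e‖ ≤
      4 * c / pZero m c (g p) * ‖fderiv ℝ g p e‖ := by
  have hderiv : HasFDerivAt (fun q => c • beta m c (g q)) _ p :=
    ((hasFDerivAt_beta hmc (g p)).comp p hg.hasFDerivAt).const_smul c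
  have hJ := ((betaJac m c (g p)).le_opNorm (fderiv ℝ g p e)).trans
    (mul_le_mul_of_nonneg_right (norm_betaJac_le hmc (g p)) (norm_nonneg _))
  calc ‖fderiv ℝ (fun q => c • beta m c (g q)) p e‖
      = c * ‖betaJac m c (g p) (fderiv ℝ g p e)‖ := by
        rw [hderiv.fderiv, smul_apply, norm_smul, Real.norm_of_nonneg hc]; rfl
    _ ≤ c * (4 / pZero m c (g p) * ‖fderiv ℝ g p e‖) := by gcongr
    _ = 4 * c / pZero m c (g p) * ‖fderiv ℝ g p e‖ := by ring

lemma fderiv_lorentzForce_comp_apply (hmc : 0 < m * c) (hE : DifferentiableAt ℝ E (f p))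
    (hB : DifferentiableAt ℝ B (f p)) (hf : DifferentiableAt ℝ f p)
    (hg : DifferentiableAt ℝ g p) (e : ℝ³) :
    fderiv ℝ (fun q => lorentzForce m c (E (f q)) (B (f q)) (g q)) p e =
      -fderiv ℝ E (f p) (fderiv ℝ f p e) -
        (beta m c (g p) ⨯₃ fderiv ℝ B (f p) (fderiv ℝ f p e) +
          betaJac m c (g p) (fderiv ℝ g p e) ⨯₃ B (f p)) := by
  have hEf : HasFDerivAt (fun q => E (f q)) _ p := hE.hasFDerivAt.comp p hf.hasFDerivAt
  have hBf : HasFDerivAt (fun q => B (f q)) _ p := hB.hasFDerivAt.comp p hf.hasFDerivAt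
  have hcross : HasFDerivAt (fun q => crossCLM (beta m c (g q)) (B (f q))) _ p :=
    (crossCLM.hasFDerivAt.comp p ((hasFDerivAt_beta hmc (g p)).comp p hg.hasFDerivAt)).clm_apply
      hBf
  rw [show (fun q => lorentzForce m c (E (f q)) (B (f q)) (g q)) =
      fun q => -E (f q) - crossCLM (beta m c (g q)) (B (f q)) from rfl,
    (hEf.fun_neg.fun_sub hcross).fderiv]
  rfl

lemma norm_fderiv_lorentzForce_comp_le {A K : ℝ} (hmc : 0 < m * c)
    (hE : DifferentiableAt ℝ E (f p)) (hB : DifferentiableAt ℝ B (f p))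
    (hf : DifferentiableAt ℝ f p) (hg : DifferentiableAt ℝ g p)
    (hDE : ‖fderiv ℝ E (f p)‖ ≤ A) (hDB : ‖fderiv ℝ B (f p)‖ ≤ A)
    (hBK : ‖B (f p)‖ ≤ K) (e : ℝ³) :
    ‖fderiv ℝ (fun q => lorentzForce m c (E (f q)) (B (f q)) (g q)) p e‖ ≤
      3 * A * ‖fderiv ℝ f p e‖ + 8 * K / (m * c) * ‖fderiv ℝ g p e‖ := by
  set Y := fderiv ℝ f p e
  set Q := fderiv ℝ g p e
  have hA : 0 ≤ A := (norm_nonneg _).trans hDE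
  have hK : 0 ≤ K := (norm_nonneg _).trans hBK
  have hEY : ‖fderiv ℝ E (f p) Y‖ ≤ A * ‖Y‖ :=
    (ContinuousLinearMap.le_opNorm _ _).trans (by gcongr)
  have hBY : ‖beta m c (g p) ⨯₃ fderiv ℝ B (f p) Y‖ ≤ 2 * A * ‖Y‖ :=
    calc _ ≤ 2 * ‖beta m c (g p)‖ * ‖fderiv ℝ B (f p) Y‖ := norm_crossProduct_le _ _
      _ ≤ 2 * 1 * (A * ‖Y‖) := by
        gcongr
        exacts [norm_beta_le_one hmc _, (ContinuousLinearMap.le_opNorm _ _).trans (by gcongr)]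
      _ = 2 * A * ‖Y‖ := by ring
  have hJQ : ‖betaJac m c (g p) Q ⨯₃ B (f p)‖ ≤ 8 * K / (m * c) * ‖Q‖ :=
    calc _ ≤ 2 * ‖betaJac m c (g p) Q‖ * ‖B (f p)‖ := norm_crossProduct_le _ _
      _ ≤ 2 * (4 / (m * c) * ‖Q‖) * K := by
        gcongr
        refine (ContinuousLinearMap.le_opNorm _ _).trans
          (mul_le_mul_of_nonneg_right ?_ (norm_nonneg _))
        exact (norm_betaJac_le hmc _).trans (by gcongr; exact mul_le_pZero m c _)
      _ = 8 * K / (m * c) * ‖Q‖ := by ring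
  rw [fderiv_lorentzForce_comp_apply hmc hE hB hf hg]
  calc _ ≤ ‖fderiv ℝ E (f p) Y‖ + (‖beta m c (g p) ⨯₃ fderiv ℝ B (f p) Y‖ +
        ‖betaJac m c (g p) Q ⨯₃ B (f p)‖) := by
        refine (norm_sub_le _ _).trans ?_
        rw [norm_neg]
        gcongr
        exact norm_add_le _ _
    _ ≤ 3 * A * ‖Y‖ + 8 * K / (m * c) * ‖Q‖ := by linarith

lemma norm_lorentzForce_le {K : ℝ} (hmc : 0 < m * c) {E B : ℝ³} (hE : ‖E‖ ≤ K)
    (hB : ‖B‖ ≤ K) (u : ℝ³) : ‖lorentzForce m c E B u‖ ≤ 3 * K :=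
  calc ‖lorentzForce m c E B u‖ ≤ ‖E‖ + 2 * ‖beta m c u‖ * ‖B‖ :=
        (norm_sub_le _ _).trans (by rw [norm_neg]; gcongr; exact norm_crossProduct_le _ _)
    _ ≤ K + 2 * 1 * K := by
        nlinarith [norm_beta_le_one hmc u, norm_nonneg B, norm_nonneg (beta m c u)]
    _ = 3 * K := by ring

end Linearization

section Gronwall

variable {F G : Type*} [NormedAddCommGroup F] [NormedSpace ℝ F]
  [NormedAddCommGroup G] [NormedSpace ℝ G]

lemma norm_le_mul_exp_of_norm_deriv_le {f f' : ℝ → F} {L : ℝ}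
    (hf : ∀ s, HasDerivAt f (f' s) s) (bound : ∀ s, ‖f' s‖ ≤ L * ‖f s‖) {t τ : ℝ}
    (h : t ≤ τ) :
    ‖f τ‖ ≤ ‖f t‖ * Real.exp (L * (τ - t)) := by
  have := norm_le_gronwallBound_of_norm_deriv_right_le (ε := 0)
    (fun s _ => (hf s).continuousAt.continuousWithinAt) (fun s _ => (hf s).hasDerivWithinAt)
    le_rfl (fun s _ => by simpa using bound s) τ (Set.right_mem_Icc.2 h)
  rwa [gronwallBound_ε0] at this

lemma norm_le_mul_exp_abs_of_norm_deriv_le {f f' : ℝ → F} {L : ℝ}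
    (hf : ∀ s, HasDerivAt f (f' s) s) (bound : ∀ s, ‖f' s‖ ≤ L * ‖f s‖) (t τ : ℝ) :
    ‖f τ‖ ≤ ‖f t‖ * Real.exp (L * |τ - t|) := by
  rcases le_total t τ with h | h
  · rw [abs_of_nonneg (sub_nonneg.2 h)]
    exact norm_le_mul_exp_of_norm_deriv_le hf bound h
  · have hrev : ∀ s, HasDerivAt (fun σ => f (-σ)) ((-1 : ℝ) • f' (-s)) s :=
      fun s => (hf (-s)).scomp s (hasDerivAt_neg s)
    have := norm_le_mul_exp_of_norm_deriv_le hrev (fun s => by simpa using bound (-s))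
      (neg_le_neg h)
    rwa [neg_neg, neg_neg, neg_sub_neg, ← abs_of_nonneg (sub_nonneg.2 h), abs_sub_comm] at this

lemma norm_prod_le_mul_exp_of_coupled_bounds {y y' : ℝ → F} {q q' : ℝ → G} {a b d : ℝ}
    (hy : ∀ s, HasDerivAt y (y' s) s) (hq : ∀ s, HasDerivAt q (q' s) s)
    (ha : 0 ≤ a) (hb : 0 ≤ b) (hd : 0 ≤ d)
    (hy' : ∀ s, ‖y' s‖ ≤ a * ‖q s‖) (hq' : ∀ s, ‖q' s‖ ≤ b * ‖y s‖ + d * ‖q s‖)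
    (t τ : ℝ) :
    ‖(y τ, q τ)‖ ≤ ‖(y t, q t)‖ * Real.exp ((a + b + d) * |τ - t|) := by
  refine norm_le_mul_exp_abs_of_norm_deriv_le (fun s => (hy s).prodMk (hq s)) (fun s => ?_) t τ
  have hys := norm_fst_le (y s, q s)
  have hqs := norm_snd_le (y s, q s)
  rw [Prod.norm_def]
  refine max_le ((hy' s).trans ?_) ((hq' s).trans ?_) <;> nlinarith [norm_nonneg (y s, q s)]

end Gronwall

lemma half_pZero_le_of_norm_sub_le {m c : ℝ} (hmc : 0 < m * c) {u v : ℝ³}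
    (h : ‖u - v‖ ≤ m * c / 6) : pZero m c v / 2 ≤ pZero m c u := by
  have := abs_le.1 (abs_pZero_sub_pZero_le hmc u v)
  linarith [mul_le_pZero m c v]

structure IsCharacteristic (m c : ℝ) (E B : ℝ → ℝ³ → ℝ³) (t : ℝ)
    (x : ℝ³) (X P : ℝ → ℝ³ → ℝ³) : Prop where
  X_initial : ∀ p, X t p = x
  P_initial : ∀ p, P t p = p
  hasDerivAt_X : ∀ τ p, HasDerivAt (X · p) (c • beta m c (P τ p)) τ
  hasDerivAt_P : ∀ τ p,
    HasDerivAt (P · p) (lorentzForce m c (E τ (X τ p)) (B τ (X τ p)) (P τ p)) τ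

namespace IsCharacteristic

variable {m c A K t : ℝ} {E B X P : ℝ → ℝ³ → ℝ³} {x : ℝ³}

lemma norm_P_sub_le (h : IsCharacteristic m c E B t x X P) (hmc : 0 < m * c)
    (hEK : ∀ s y, ‖E s y‖ ≤ K) (hBK : ∀ s y, ‖B s y‖ ≤ K) (p : ℝ³) (σ : ℝ) :
    ‖P σ p - p‖ ≤ 3 * K * |σ - t| := by
  have := Convex.norm_image_sub_le_of_norm_hasDerivWithin_le
    (fun s _ => (h.hasDerivAt_P s p).hasDerivWithinAt)
    (fun s _ => norm_lorentzForce_le hmc (hEK _ _) (hBK _ _) _) convex_univ (Set.mem_univ t)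
    (Set.mem_univ σ)
  rwa [h.P_initial, Real.norm_eq_abs] at this

lemma fderiv_X_initial (h : IsCharacteristic m c E B t x X P) (p : ℝ³) :
    fderiv ℝ (X t) p = 0 := by
  rw [funext h.X_initial, fderiv_const_apply]

lemma fderiv_P_initial (h : IsCharacteristic m c E B t x X P) (p : ℝ³) :
    fderiv ℝ (P t) p = ContinuousLinearMap.id ℝ _ := by
  rw [show P t = id from funext h.P_initial, fderiv_id]

lemma norm_fderiv_le_exp (h : IsCharacteristic m c E B t x X P) (hm : 0 < m) (hc : 0 < c)
    (hX : ContDiff ℝ 2 (uncurry X)) (hP : ContDiff ℝ 2 (uncurry P))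
    (hE : ∀ s, Differentiable ℝ (E s)) (hB : ∀ s, Differentiable ℝ (B s))
    (hDE : ∀ s y, ‖fderiv ℝ (E s) y‖ ≤ A) (hDB : ∀ s y, ‖fderiv ℝ (B s) y‖ ≤ A)
    (hBK : ∀ s y, ‖B s y‖ ≤ K) (p e : ℝ³) (σ : ℝ) :
    ‖(fderiv ℝ (X σ) p e, fderiv ℝ (P σ) p e)‖ ≤
      ‖e‖ * Real.exp ((4 / m + 3 * A + 8 * K / (m * c)) * |σ - t|) := by
  have hmc := mul_pos hm hc
  have hXσ := fun σ => (hX.differentiable (by norm_num)).of_uncurry σ p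
  have hPσ := fun σ => (hP.differentiable (by norm_num)).of_uncurry σ p
  have hvel : ∀ s, ‖fderiv ℝ (fun q => c • beta m c (P s q)) p e‖ ≤
      4 / m * ‖fderiv ℝ (P s) p e‖ := fun s => by
    refine (norm_fderiv_smul_beta_comp_le hmc hc.le (hPσ s) e).trans
      (mul_le_mul_of_nonneg_right ?_ (norm_nonneg _))
    calc 4 * c / pZero m c (P s p) ≤ 4 * c / (m * c) := by gcongr; exact mul_le_pZero m c _
      _ = 4 / m := by field_simp
  have := norm_prod_le_mul_exp_of_coupled_bounds
    (fun s => hasDerivAt_fderiv_of_contDiff_uncurry hX h.hasDerivAt_X p e s)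
    (fun s => hasDerivAt_fderiv_of_contDiff_uncurry hP h.hasDerivAt_P p e s)
    (by positivity) (by linarith [(norm_nonneg _).trans (hDE t x)])
    (div_nonneg (by linarith [(norm_nonneg _).trans (hBK t x)]) hmc.le) hvel
    (fun s => norm_fderiv_lorentzForce_comp_le hmc (hE s _) (hB s _) (hXσ s) (hPσ s)
      (hDE s _) (hDB s _) (hBK s _) e) t σ
  have he : ‖((0 : ℝ³), e)‖ = ‖e‖ := by simp [Prod.norm_def]
  rwa [h.fderiv_X_initial, h.fderiv_P_initial, zero_apply, ContinuousLinearMap.id_apply, he]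
    at this

lemma norm_fderiv_X_le (h : IsCharacteristic m c E B t x X P) (hm : 0 < m) (hc : 0 < c)
    (hX : ContDiff ℝ 2 (uncurry X)) (hP : ContDiff ℝ 2 (uncurry P))
    (hE : ∀ s, Differentiable ℝ (E s)) (hB : ∀ s, Differentiable ℝ (B s))
    (hDE : ∀ s y, ‖fderiv ℝ (E s) y‖ ≤ A) (hDB : ∀ s y, ‖fderiv ℝ (B s) y‖ ≤ A)
    (hEK : ∀ s y, ‖E s y‖ ≤ K) (hBK : ∀ s y, ‖B s y‖ ≤ K) {T τ : ℝ}
    (hT : 18 * K * T ≤ m * c) (hτ : |τ - t| ≤ T) (p e : ℝ³) :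
    ‖fderiv ℝ (X τ) p e‖ ≤ 8 * c * Real.exp ((4 / m + 3 * A + 8 * K / (m * c)) * T) * ‖e‖ /
      pZero m c p * |τ - t| := by
  have hmc := mul_pos hm hc
  have hK : 0 ≤ K := (norm_nonneg _).trans (hBK t x)
  have hA : 0 ≤ A := (norm_nonneg _).trans (hDE t x)
  have hp := pZero_pos hmc p
  set L := 4 / m + 3 * A + 8 * K / (m * c)
  have hbound : ∀ σ ∈ Set.uIcc t τ, ‖fderiv ℝ (fun q => c • beta m c (P σ q)) p e‖ ≤
      8 * c * Real.exp (L * T) * ‖e‖ / pZero m c p := by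
    intro σ hσ
    have hσT : |σ - t| ≤ T := (Set.abs_sub_left_of_mem_uIcc hσ).trans hτ
    have hslow : pZero m c p / 2 ≤ pZero m c (P σ p) :=
      half_pZero_le_of_norm_sub_le hmc ((h.norm_P_sub_le hmc hEK hBK p σ).trans (by nlinarith))
    have hQ : ‖fderiv ℝ (P σ) p e‖ ≤ ‖e‖ * Real.exp (L * T) :=
      (norm_snd_le _).trans ((h.norm_fderiv_le_exp hm hc hX hP hE hB hDE hDB hBK p e σ).trans
        (by gcongr))
    calc _ ≤ 4 * c / pZero m c (P σ p) * ‖fderiv ℝ (P σ) p e‖ :=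
          norm_fderiv_smul_beta_comp_le hmc hc.le
            ((hP.differentiable (by norm_num)).of_uncurry σ p) e
      _ ≤ 4 * c / (pZero m c p / 2) * (‖e‖ * Real.exp (L * T)) := by gcongr
      _ = 8 * c * Real.exp (L * T) * ‖e‖ / pZero m c p := by field_simp; ring
  have := Convex.norm_image_sub_le_of_norm_hasDerivWithin_le
    (fun σ _ => (hasDerivAt_fderiv_of_contDiff_uncurry hX h.hasDerivAt_X p e σ).hasDerivWithinAt)
    hbound (convex_uIcc t τ) Set.left_mem_uIcc Set.right_mem_uIcc
  rwa [h.fderiv_X_initial, zero_apply, sub_zero, Real.norm_eq_abs] at this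

end IsCharacteristic

/-- There exist `T̄, C > 0` depending only on `m, c, K` such that, for any `C¹`
electromagnetic fields bounded (together with their spatial gradients) by `K`,
and any `C²` solution `(X, P)` of the relativistic characteristic system with
data `X(t;t,x,p) = x`, `P(t;t,x,p) = p`, the momentum derivatives of the spatial
characteristic satisfy `|∂_{p_i} X_j(τ;t,x,p)| ≤ C c |t − τ| / p⁰` for `|τ − t| ≤ T̄`. -/
theorem stmt16 (m c K : ℝ) (hm : 0 < m) (hc : 0 < c) (hK : 0 < K) :
    ∃ Tbar C : ℝ, 0 < Tbar ∧ 0 < C ∧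
      ∀ (E B : ℝ → (Fin 3 → ℝ) → Fin 3 → ℝ),
        ContDiff ℝ 1 (fun z : ℝ × (Fin 3 → ℝ) => E z.1 z.2) →
        ContDiff ℝ 1 (fun z : ℝ × (Fin 3 → ℝ) => B z.1 z.2) →
        (∀ s y i, |E s y i| ≤ K) →
        (∀ s y i, |B s y i| ≤ K) →
        (∀ s y i j, |fderiv ℝ (fun y' => E s y' i) y (Pi.single j 1)| ≤ K) →
        (∀ s y i j, |fderiv ℝ (fun y' => B s y' i) y (Pi.single j 1)| ≤ K) →
        ∀ (t : ℝ), 0 ≤ t → ∀ (x : Fin 3 → ℝ),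
        ∀ (X P : ℝ → (Fin 3 → ℝ) → Fin 3 → ℝ),
          ContDiff ℝ 2 (fun z : ℝ × (Fin 3 → ℝ) => X z.1 z.2) →
          ContDiff ℝ 2 (fun z : ℝ × (Fin 3 → ℝ) => P z.1 z.2) →
          (∀ p, X t p = x) → (∀ p, P t p = p) →
          (∀ τ p, HasDerivAt (fun σ => X σ p)
              ((c / Real.sqrt (m ^ 2 * c ^ 2 + dot3 (P τ p) (P τ p))) • P τ p) τ) →
          (∀ τ p, HasDerivAt (fun σ => P σ p)
              (-(E τ (X τ p)) -
                crossProduct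
                  ((Real.sqrt (m ^ 2 * c ^ 2 + dot3 (P τ p) (P τ p)))⁻¹ • P τ p)
                  (B τ (X τ p))) τ) →
          ∀ τ, |τ - t| ≤ Tbar → ∀ (p : Fin 3 → ℝ) (i j : Fin 3),
            |fderiv ℝ (fun q => X τ q j) p (Pi.single i 1)|
              ≤ C * c * |t - τ| / Real.sqrt (m ^ 2 * c ^ 2 + dot3 p p) := by
  set T := m * c / (18 * K)
  refine ⟨T, 8 * Real.exp ((4 / m + 3 * (3 * K) + 8 * K / (m * c)) * T), by positivity,
    by positivity, ?_⟩
  intro E B hE hB hEK hBK hDE hDB t _ x X P hX hP hX0 hP0 hVel hFor τ hτ p i j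
  have hEs := (hE.differentiable one_ne_zero).of_uncurry
  have hBs := (hB.differentiable one_ne_zero).of_uncurry
  have hnorm : ∀ {F : ℝ → ℝ³ → ℝ³}, (∀ s y i, |F s y i| ≤ K) → ∀ s y, ‖F s y‖ ≤ K :=
    fun hF s y => (pi_norm_le_iff_of_nonneg hK.le).2 (hF s y)
  have hgrad : ∀ {F : ℝ → ℝ³ → ℝ³}, (∀ s, Differentiable ℝ (F s)) →
      (∀ s y i j, |fderiv ℝ (fun y' => F s y' i) y (Pi.single j 1)| ≤ K) →
      ∀ s y, ‖fderiv ℝ (F s) y‖ ≤ 3 * K :=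
    fun hF hF' s y => by simpa using norm_fderiv_le_of_abs_partial_le (hF s y) hK.le (hF' s y)
  have hchar : IsCharacteristic m c E B t x X P :=
    ⟨hX0, hP0, fun τ p => by
      simpa only [div_eq_mul_inv, mul_smul, beta, pZero] using hVel τ p, hFor⟩
  have hT : 18 * K * T ≤ m * c := le_of_eq (by simp only [T]; field_simp)
  calc |fderiv ℝ (fun q => X τ q j) p (Pi.single i 1)|
      = |fderiv ℝ (X τ) p (Pi.single i 1) j| := by
        rw [fderiv_apply ((hX.differentiable (by norm_num)).of_uncurry τ p)]; rfl
    _ ≤ ‖fderiv ℝ (X τ) p (Pi.single i 1)‖ :=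
        (Real.norm_eq_abs _).symm.trans_le (norm_le_pi_norm _ j)
    _ ≤ _ := hchar.norm_fderiv_X_le hm hc hX hP hEs hBs (hgrad hEs hDE) (hgrad hBs hDB)
        (hnorm hEK) (hnorm hBK) hT hτ p (Pi.single i 1)
    _ = _ := by rw [Pi.norm_single, norm_one, abs_sub_comm]; unfold pZero; ring
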